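/- arXiv:1708.09028 — 2 statements merged into one kernel-verified Lean document; each statement's English description precedes it below -/
import Mathlib

section
/- Let Φ: [0,∞) → [0,1] be an n-monotone Archimedean generator that is (n-1)-times differentiable, and let F̄_R(x) = Σ_{j=0}^{n-1} (-1)^j (x^j/j!) Φ^{(j)}(x). Then for all x ≥ 0 and all a ∈ (0,1), Φ(ax)/(1-a)^{n-1} ≥ F̄_R(x). -/
/-!
Expand `Φ` around `x` by Taylor's theorem with Lagrange remainder and evaluate at `a x`. With
`t = (1 - a) x`, the term of order `j` is `(-1)^j Φ^{(j)}(x) t^j / j!`; for `j ≤ n - 2` it is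
nonnegative, so its factor `(1 - a)^j` may be lowered to `(1 - a)^(n-1)`. The remainder, taken at
some `ξ ∈ (a x, x)`, dominates the term of order `n - 1` at `x`, because `(-1)^(n-2) Φ^{(n-1)}`
is the derivative of a convex function and hence nondecreasing.
-/

open Set Finset

theorem taylorWithinEval_eq_sum_iteratedDeriv {f : ℝ → ℝ} {n : ℕ} (hf : ContDiff ℝ n f)
    {s : Set ℝ} (hs : UniqueDiffOn ℝ s) {x₀ : ℝ} (hx₀ : x₀ ∈ s) (x : ℝ) :
    taylorWithinEval f n s x₀ x =
      ∑ k ∈ range (n + 1), iteratedDeriv k f x₀ * (x - x₀) ^ k / k.factorial := by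
  rw [taylor_within_apply]
  refine sum_congr rfl fun k hk => ?_
  rw [iteratedDerivWithin_eq_iteratedDeriv hs
    (hf.of_le (by exact_mod_cast Nat.lt_succ_iff.mp (mem_range.mp hk))).contDiffAt hx₀,
    smul_eq_mul]
  ring

theorem exists_taylor_lagrange {f : ℝ → ℝ} {n : ℕ} (hf : ContDiff ℝ (n + 1) f) {x₀ x : ℝ}
    (hx : x₀ ≠ x) :
    ∃ ξ ∈ uIoo x₀ x, f x = ∑ k ∈ range (n + 1), iteratedDeriv k f x₀ * (x - x₀) ^ k / k.factorial
      + iteratedDeriv (n + 1) f ξ * (x - x₀) ^ (n + 1) / (n + 1).factorial := by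
  obtain ⟨ξ, hξ, h⟩ := taylor_mean_remainder_lagrange_iteratedDeriv hx hf.contDiffOn
  refine ⟨ξ, hξ, ?_⟩
  rw [taylorWithinEval_eq_sum_iteratedDeriv (hf.of_le (by norm_cast; omega))
    (uniqueDiffOn_uIcc hx) left_mem_uIcc] at h
  linarith

theorem sum_taylor_le_of_monotoneOn {f : ℝ → ℝ} {m : ℕ} (hf : ContDiff ℝ (m + 1) f) {y x : ℝ}
    (hyx : y ≤ x)
    (hmono : MonotoneOn (fun t => (-1) ^ m * iteratedDeriv (m + 1) f t) (Icc y x)) :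
    ∑ k ∈ range (m + 2), iteratedDeriv k f x * (y - x) ^ k / k.factorial ≤ f y := by
  rcases hyx.eq_or_lt with rfl | hyx
  · simp [sum_range_succ']
  obtain ⟨ξ, hξ, hf_eq⟩ := exists_taylor_lagrange hf hyx.ne'
  rw [uIoo_of_ge hyx.le] at hξ
  have hremainder : iteratedDeriv (m + 1) f x * (y - x) ^ (m + 1)
      ≤ iteratedDeriv (m + 1) f ξ * (y - x) ^ (m + 1) := by
    have hξx := hmono (Ioo_subset_Icc_self hξ) (right_mem_Icc.mpr hyx.le) hξ.2.le
    have hpow : (y - x) ^ (m + 1) = -((-1) ^ m * (x - y) ^ (m + 1)) := by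
      rw [show y - x = -1 * (x - y) by ring, mul_pow, pow_succ]; ring
    rw [hpow]
    nlinarith [pow_pos (sub_pos.mpr hyx) (m + 1)]
  rw [sum_range_succ, hf_eq]
  gcongr

theorem ConvexOn.monotoneOn_const_mul_iteratedDeriv_succ {f : ℝ → ℝ} {m : ℕ} {s : Set ℝ} {c : ℝ}
    (hf : Differentiable ℝ (iteratedDeriv m f))
    (hconv : ConvexOn ℝ s (fun x => c * iteratedDeriv m f x)) :
    MonotoneOn (fun x => c * iteratedDeriv (m + 1) f x) s := by
  have hderiv : deriv (fun x => c * iteratedDeriv m f x) = fun x => c * iteratedDeriv (m + 1) f x :=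
    funext fun x => by rw [deriv_const_mul _ (hf x), iteratedDeriv_succ]
  exact hderiv ▸ hconv.monotoneOn_deriv fun x _ => (hf x).const_mul c

theorem pow_mul_sum_le_sum_pow_mul {t : ℝ} (ht₀ : 0 ≤ t) (ht₁ : t ≤ 1) {N : ℕ} {c : ℕ → ℝ}
    (hc : ∀ j < N, 0 ≤ c j) :
    t ^ N * ∑ j ∈ range (N + 1), c j ≤ ∑ j ∈ range (N + 1), t ^ j * c j := by
  rw [mul_sum, sum_range_succ, sum_range_succ]
  refine add_le_add (sum_le_sum fun j hj => ?_) le_rfl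
  exact mul_le_mul_of_nonneg_right (pow_le_pow_of_le_one ht₀ ht₁ (mem_range.mp hj).le)
    (hc j (mem_range.mp hj))

theorem stmt0_general (n : ℕ) (hn : 2 ≤ n) (Φ : ℝ → ℝ)
    (hdiff : ContDiff ℝ (n - 1) Φ)
    (hmono : ∀ i ≤ n - 2, ∀ x ≥ (0:ℝ), 0 ≤ (-1:ℝ)^i * iteratedDeriv i Φ x)
    (hconv : ConvexOn ℝ (Set.Ici 0) (fun x => (-1:ℝ)^(n-2) * iteratedDeriv (n-2) Φ x)) :
    ∀ x ≥ (0:ℝ), ∀ a ∈ Set.Ioo (0:ℝ) 1,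
      (∑ j ∈ Finset.range n, (-1:ℝ)^j * x^j / (j.factorial : ℝ) * iteratedDeriv j Φ x)
        ≤ Φ (a * x) / (1 - a)^(n-1) := by
  obtain ⟨m, rfl⟩ : ∃ m, n = m + 2 := ⟨n - 2, by omega⟩
  simp only [Nat.add_sub_cancel] at hdiff hmono hconv ⊢
  intro x hx a ⟨_, ha₁⟩
  have hΦ : ContDiff ℝ (m + 1) Φ := by exact_mod_cast hdiff
  have hmono_succ : MonotoneOn (fun t => (-1) ^ m * iteratedDeriv (m + 1) Φ t) (Icc (a * x) x) :=
    (hconv.monotoneOn_const_mul_iteratedDeriv_succ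
      (hΦ.differentiable_iteratedDeriv m (by exact_mod_cast m.lt_succ_self))).mono
      fun t ht => le_trans (by positivity) ht.1
  have htaylor := sum_taylor_le_of_monotoneOn hΦ (mul_le_of_le_one_left hx ha₁.le) hmono_succ
  rw [le_div_iff₀ (pow_pos (sub_pos.mpr ha₁) _), mul_comm]
  calc (1 - a) ^ (m + 1) * ∑ j ∈ range (m + 2), (-1) ^ j * x ^ j / j.factorial * iteratedDeriv j Φ x
      ≤ ∑ j ∈ range (m + 2), (1 - a) ^ j * ((-1) ^ j * x ^ j / j.factorial * iteratedDeriv j Φ x) :=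
        pow_mul_sum_le_sum_pow_mul (sub_nonneg.mpr ha₁.le) (by linarith) fun j hj => by
          rw [show (-1) ^ j * x ^ j / j.factorial * iteratedDeriv j Φ x
              = x ^ j / j.factorial * ((-1) ^ j * iteratedDeriv j Φ x) by ring]
          exact mul_nonneg (by positivity) (hmono j (Nat.lt_succ_iff.mp hj) x hx)
    _ = ∑ j ∈ range (m + 2), iteratedDeriv j Φ x * (a * x - x) ^ j / j.factorial :=
        sum_congr rfl fun j _ => by
          rw [show a * x - x = (1 - a) * x * -1 by ring, mul_pow, mul_pow]; ring
    _ ≤ Φ (a * x) := htaylor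

/-- for an `n`-monotone, `(n-1)`-times differentiable Archimedean generator `Φ`,
the survival function `F̄_R(x) = ∑_{j=0}^{n-1} (-1)^j x^j/j! Φ^{(j)}(x)` satisfies
`Φ(ax)/(1-a)^{n-1} ≥ F̄_R(x)` for all `x ≥ 0` and `a ∈ (0,1)`. -/
theorem stmt0 (n : ℕ) (hn : 2 ≤ n) (Φ : ℝ → ℝ)
    (hmap : ∀ x ≥ (0:ℝ), Φ x ∈ Set.Icc (0:ℝ) 1)
    (hdiff : ContDiff ℝ (n - 1) Φ)
    (hmono : ∀ i ≤ n - 2, ∀ x ≥ (0:ℝ), 0 ≤ (-1:ℝ)^i * iteratedDeriv i Φ x)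
    (hanti : AntitoneOn (fun x => (-1:ℝ)^(n-2) * iteratedDeriv (n-2) Φ x) (Set.Ici 0))
    (hconv : ConvexOn ℝ (Set.Ici 0) (fun x => (-1:ℝ)^(n-2) * iteratedDeriv (n-2) Φ x)) :
    ∀ x ≥ (0:ℝ), ∀ a ∈ Set.Ioo (0:ℝ) 1,
      (∑ j ∈ Finset.range n, (-1:ℝ)^j * x^j / (j.factorial : ℝ) * iteratedDeriv j Φ x)
        ≤ Φ (a * x) / (1 - a)^(n-1) :=
  stmt0_general n hn Φ hdiff hmono hconv
end

section
/- Let X_1,…,X_n be nonnegative random variables with X_i having regularly varying survival function F̄_i(x) = x^{-α_i} l_i(x), α_i > 0, and let z(s) = P(X_1 + ⋯ + X_n > s). Define Z(s) = P(M_n > s) + Σ_{i=1}^n (F̄_i(s/n) - F̄_i(s)) I_{A_i(s)}, where M_n = max_i X_i and A_i(s) are events with I_{A_i(s)} measurable indicators such that E[Z(s)] = z(s). Then limsup_{s→∞} Var(Z(s))/z(s)^2 ≤ Σ_{i=1}^n n^{2α_i}, so Z(s) has bounded relative error. -/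
open Set Finset Filter MeasureTheory ProbabilityTheory Topology

/-!
`Z(s)` has mean `z(s)` and lies between `m = P(Mₙ > s) ≥ 0` and `m + ∑ cᵢ`, where
`cᵢ = F̄ᵢ(s/n) - F̄ᵢ(s) ≥ 0`. For a random variable with values in `[m, m + w]`, `m ≥ 0`, the
Bhatia–Davis inequality gives `Var ≤ w · E`, so `Var Z(s) ≤ (∑ cᵢ) z(s)`. By regular variation
`F̄ᵢ(s/n) / F̄ᵢ(s) → n^{αᵢ} < 1 + n^{2αᵢ}`, so eventually `cᵢ ≤ n^{2αᵢ} F̄ᵢ(s) ≤ n^{2αᵢ} z(s)`,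
the last step because `Xᵢ ≤ ∑ Xⱼ`. Hence `Var Z(s) ≤ (∑ n^{2αᵢ}) z(s)²`, and
`E Z(s)² = Var Z(s) + z(s)²` gives the bounded relative error.
-/

def IsSlowlyVarying (l : ℝ → ℝ) : Prop :=
  ∀ t > (0 : ℝ), Tendsto (fun x => l (t * x) / l x) atTop (𝓝 1)

namespace IsSlowlyVarying

variable {l F : ℝ → ℝ} {α : ℝ}

lemma eventually_ne_zero (hl : IsSlowlyVarying l) : ∀ᶠ x in atTop, l x ≠ 0 :=
  ((hl 1 one_pos).eventually_ne one_ne_zero).mono fun _ hx => (div_ne_zero_iff.1 hx).2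

lemma tendsto_div_of_eq_rpow_mul (hl : IsSlowlyVarying l) (hF : ∀ x > 0, F x = x ^ (-α) * l x)
    {t : ℝ} (ht : 0 < t) : Tendsto (fun x => F (t * x) / F x) atTop (𝓝 (t ^ (-α))) := by
  have h := (hl t ht).const_mul (t ^ (-α))
  rw [mul_one] at h
  refine h.congr' ?_
  filter_upwards [eventually_gt_atTop 0] with x hx
  rw [hF x hx, hF _ (mul_pos ht hx), Real.mul_rpow ht.le hx.le, mul_assoc, mul_div_assoc,
    mul_div_mul_left _ _ (Real.rpow_pos_of_pos hx _).ne']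

lemma eventually_le_mul_of_eq_rpow_mul (hl : IsSlowlyVarying l)
    (hF : ∀ x > 0, F x = x ^ (-α) * l x) (hF_nonneg : ∀ x, 0 ≤ F x) {t K : ℝ} (ht : 0 < t)
    (hK : t ^ (-α) < K) : ∀ᶠ x in atTop, F (t * x) ≤ K * F x := by
  filter_upwards [(hl.tendsto_div_of_eq_rpow_mul hF ht).eventually_lt_const hK,
    hl.eventually_ne_zero, eventually_gt_atTop 0] with x hlt hlx hx
  have hFx : 0 < F x := (hF_nonneg x).lt_of_ne' <| by
    rw [hF x hx]
    exact mul_ne_zero (Real.rpow_pos_of_pos hx _).ne' hlx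
  exact ((div_lt_iff₀ hFx).1 hlt).le

lemma eventually_div_le_one_add_rpow_mul (hl : IsSlowlyVarying l)
    (hF : ∀ x > 0, F x = x ^ (-α) * l x) (hF_nonneg : ∀ x, 0 ≤ F x) {c : ℝ} (hc : 0 < c) :
    ∀ᶠ x in atTop, F (x / c) ≤ (1 + c ^ (2 * α)) * F x := by
  -- `y < 1 + y²` with `y = c ^ α`
  have hK : c⁻¹ ^ (-α) < 1 + c ^ (2 * α) := by
    rw [Real.inv_rpow hc.le, Real.rpow_neg hc.le, inv_inv, mul_comm, Real.rpow_mul hc.le,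
      Real.rpow_two]
    nlinarith [sq_nonneg (c ^ α - 1)]
  simpa only [inv_mul_eq_div] using
    hl.eventually_le_mul_of_eq_rpow_mul hF hF_nonneg (inv_pos.2 hc) hK

end IsSlowlyVarying

lemma sum_mul_indicator_one_mem_Icc {ι α : Type*} (s : Finset ι) {c : ι → ℝ}
    (hc : ∀ i ∈ s, 0 ≤ c i) (A : ι → Set α) (x : α) :
    ∑ i ∈ s, c i * (A i).indicator (fun _ => (1 : ℝ)) x ∈ Set.Icc 0 (∑ i ∈ s, c i) := by
  have h01 : ∀ i, (A i).indicator (fun _ => (1 : ℝ)) x ∈ Set.Icc 0 1 := fun i => by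
    by_cases hx : x ∈ A i <;> simp [hx]
  constructor
  · exact sum_nonneg fun i hi => mul_nonneg (hc i hi) (h01 i).1
  · exact sum_le_sum fun i hi => mul_le_of_le_one_right (hc i hi) (h01 i).2

section Survival

variable {Ω : Type*} [MeasurableSpace Ω] {μ : Measure Ω} [IsFiniteMeasure μ]

lemma toReal_measure_lt_mono {Y Y' : Ω → ℝ} (hY : ∀ ω, Y ω ≤ Y' ω) (x : ℝ) :
    (μ {ω | x < Y ω}).toReal ≤ (μ {ω | x < Y' ω}).toReal :=
  ENNReal.toReal_mono (measure_ne_top μ _) (measure_mono fun ω hω => lt_of_lt_of_le hω (hY ω))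

lemma antitone_toReal_measure_lt (Y : Ω → ℝ) : Antitone fun x => (μ {ω | x < Y ω}).toReal :=
  fun _ _ hxy => ENNReal.toReal_mono (measure_ne_top μ _)
    (measure_mono fun _ hω => lt_of_le_of_lt hxy hω)

end Survival

section Variance

variable {Ω : Type*} [MeasurableSpace Ω] {μ : Measure Ω} {ι : Type*} {L : Filter ι}
  {X : ι → Ω → ℝ} {C : ℝ}

lemma limsup_variance_div_sq_le [L.NeBot] (hC : 0 ≤ C)
    (h : ∀ᶠ s in L, variance (X s) μ ≤ C * μ[X s] ^ 2) :
    limsup (fun s => variance (X s) μ / μ[X s] ^ 2) L ≤ C :=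
  limsup_le_of_le (isCoboundedUnder_le_of_eventually_le L (x := 0)
      (Eventually.of_forall fun _ => div_nonneg (variance_nonneg _ _) (sq_nonneg _)))
    (h.mono fun _ hs => div_le_of_le_mul₀ (sq_nonneg _) hC hs)

variable [IsProbabilityMeasure μ]

lemma variance_le_mul_integral_of_mem_Icc {X : Ω → ℝ} {a b : ℝ} (ha : 0 ≤ a)
    (h : ∀ᵐ ω ∂μ, X ω ∈ Set.Icc a b) (hX : AEMeasurable X μ) :
    variance X μ ≤ (b - a) * μ[X] := by
  obtain ⟨_, hω⟩ := h.exists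
  have hab : 0 ≤ b - a := sub_nonneg.2 (hω.1.trans hω.2)
  calc variance X μ ≤ (b - μ[X]) * (μ[X] - a) := variance_le_sub_mul_sub h hX
    _ ≤ (b - a) * μ[X] := by nlinarith [sq_nonneg (μ[X] - a), mul_nonneg ha hab]

lemma memLp_two_and_variance_le_of_eq_add_sum_mul_indicator {ι : Type*} [Fintype ι]
    {Y : Ω → ℝ} {m : ℝ} {c : ι → ℝ} {A : ι → Set Ω} (hm : 0 ≤ m) (hc : ∀ i, 0 ≤ c i)
    (hA : ∀ i, MeasurableSet (A i))
    (hY : ∀ ω, Y ω = m + ∑ i, c i * (A i).indicator (fun _ => (1 : ℝ)) ω) :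
    MemLp Y 2 μ ∧ variance Y μ ≤ (∑ i, c i) * μ[Y] := by
  have hY_meas : Measurable Y := funext hY ▸
    measurable_const.add (Finset.measurable_sum _ fun i _ =>
      (measurable_const.indicator (hA i)).const_mul _)
  have hY_mem : ∀ ω, Y ω ∈ Set.Icc m (m + ∑ i, c i) := fun ω => by
    have h := sum_mul_indicator_one_mem_Icc univ (fun i _ => hc i) A ω
    rw [hY ω]
    exact ⟨by linarith [h.1], by linarith [h.2]⟩
  refine ⟨memLp_of_bounded (ae_of_all _ hY_mem) hY_meas.aestronglyMeasurable 2, ?_⟩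
  simpa using variance_le_mul_integral_of_mem_Icc hm (ae_of_all _ hY_mem) hY_meas.aemeasurable

lemma sqrt_integral_sq_le_of_variance_le {X : Ω → ℝ} (hX : MemLp X 2 μ)
    (h : variance X μ ≤ C * μ[X] ^ 2) : √(∫ ω, X ω ^ 2 ∂μ) ≤ √(C + 1) * |μ[X]| := by
  have h2 : ∫ ω, X ω ^ 2 ∂μ ≤ (C + 1) * μ[X] ^ 2 := by
    rw [variance_eq_sub hX] at h
    change ∫ ω, X ω ^ 2 ∂μ - _ ≤ _ at h
    linarith
  calc √(∫ ω, X ω ^ 2 ∂μ) ≤ √((C + 1) * μ[X] ^ 2) := Real.sqrt_le_sqrt h2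
    _ = √(C + 1) * |μ[X]| := by rw [Real.sqrt_mul' _ (sq_nonneg _), Real.sqrt_sq_eq_abs]

lemma isBoundedUnder_sqrt_integral_sq_div
    (h : ∀ᶠ s in L, MemLp (X s) 2 μ ∧ variance (X s) μ ≤ C * μ[X s] ^ 2) :
    IsBoundedUnder (· ≤ ·) L (fun s => √(∫ ω, X s ω ^ 2 ∂μ) / μ[X s]) := by
  refine isBoundedUnder_of_eventually_le (a := √(C + 1)) ?_
  filter_upwards [h] with s ⟨hmem, hle⟩
  rcases le_or_gt μ[X s] 0 with hneg | hpos
  · exact (div_nonpos_of_nonneg_of_nonpos (Real.sqrt_nonneg _) hneg).trans (Real.sqrt_nonneg _)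
  · have h := sqrt_integral_sq_le_of_variance_le hmem hle
    rw [abs_of_pos hpos] at h
    exact div_le_of_le_mul₀ hpos.le (Real.sqrt_nonneg _) h

end Variance

theorem stmt10_general {Ω₀ : Type*} [MeasurableSpace Ω₀] (μ : Measure Ω₀) [IsProbabilityMeasure μ]
    (n : ℕ) (X : Fin n → Ω₀ → ℝ)
    (hXpos : ∀ i ω, 0 ≤ X i ω)
    (α : Fin n → ℝ) (l : Fin n → ℝ → ℝ)
    (hslow : ∀ i, ∀ t > (0:ℝ), Tendsto (fun x => l i (t * x) / l i x) atTop (nhds 1))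
    (Fbar : Fin n → ℝ → ℝ)
    (hFbar : ∀ i x, Fbar i x = (μ {ω | x < X i ω}).toReal)
    (hreg : ∀ i, ∀ x > (0:ℝ), Fbar i x = x ^ (-(α i)) * l i x)
    (z : ℝ → ℝ) (hz : ∀ s, z s = (μ {ω | s < ∑ i, X i ω}).toReal)
    (A : Fin n → ℝ → Set Ω₀) (hA : ∀ i s, MeasurableSet (A i s))
    (Z : ℝ → Ω₀ → ℝ)
    (hZ : ∀ s ω, Z s ω = (μ {ω' | ∀ i, X i ω' ≤ s}ᶜ).toReal
      + ∑ i, (Fbar i (s / n) - Fbar i s) * (A i s).indicator (fun _ => (1:ℝ)) ω)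
    (hunbiased : ∀ s, ∫ ω, Z s ω ∂μ = z s) :
    Filter.limsup (fun s => variance (Z s) μ / (z s) ^ 2) atTop
        ≤ ∑ i, (n : ℝ) ^ (2 * α i) ∧
      Filter.IsBoundedUnder (· ≤ ·) atTop
        (fun s => Real.sqrt (∫ ω, (Z s ω) ^ 2 ∂μ) / z s) := by
  have hF_nonneg : ∀ i x, 0 ≤ Fbar i x := fun i x => hFbar i x ▸ ENNReal.toReal_nonneg
  have hF_le_z : ∀ i s, Fbar i s ≤ z s := fun i s => by
    rw [hFbar, hz]
    exact toReal_measure_lt_mono (fun ω => single_le_sum (fun j _ => hXpos j ω) (mem_univ i)) s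
  have hF_le_div : ∀ i, ∀ s ≥ (0:ℝ), Fbar i s ≤ Fbar i (s / n) := fun i s hs => by
    simp only [hFbar]
    exact antitone_toReal_measure_lt _ (div_le_self hs (Nat.one_le_cast.2 i.pos))
  have hvar : ∀ᶠ s in atTop,
      MemLp (Z s) 2 μ ∧ variance (Z s) μ ≤ (∑ i, (n : ℝ) ^ (2 * α i)) * μ[Z s] ^ 2 := by
    filter_upwards [eventually_all.2 fun i => IsSlowlyVarying.eventually_div_le_one_add_rpow_mul
      (hslow i) (hreg i) (hF_nonneg i) (Nat.cast_pos.2 i.pos), eventually_ge_atTop 0]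
      with s hs_div hs
    obtain ⟨hmem, hle⟩ := memLp_two_and_variance_le_of_eq_add_sum_mul_indicator (μ := μ)
      ENNReal.toReal_nonneg (fun i => sub_nonneg.2 (hF_le_div i s hs)) (fun i => hA i s) (hZ s)
    refine ⟨hmem, hle.trans ?_⟩
    have hz0 : 0 ≤ z s := hz s ▸ ENNReal.toReal_nonneg
    rw [hunbiased, sq, ← mul_assoc]
    gcongr
    rw [sum_mul]
    gcongr with i
    nlinarith [hs_div i, hF_le_z i s, Real.rpow_nonneg (Nat.cast_nonneg n) (2 * α i)]
  simp only [← hunbiased]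
  exact ⟨limsup_variance_div_sq_le (sum_nonneg fun i _ => Real.rpow_nonneg n.cast_nonneg _)
    (hvar.mono fun _ h => h.2), isBoundedUnder_sqrt_integral_sq_div hvar⟩

/-- bounded relative error of the first conditional Monte Carlo estimator.
With regularly varying marginals `F̄_i(x) = x^{-α_i} l_i(x)` and unbiased estimator
`Z(s) = P(Mₙ > s) + ∑_i (F̄_i(s/n) - F̄_i(s)) 1_{A_i(s)}`,
`limsup_{s→∞} Var(Z(s))/z(s)² ≤ ∑_i n^{2α_i}`. -/
theorem stmt10 {Ω₀ : Type*} [MeasurableSpace Ω₀] (μ : Measure Ω₀) [IsProbabilityMeasure μ]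
    (n : ℕ) (hn : 1 ≤ n) (X : Fin n → Ω₀ → ℝ) (hXmeas : ∀ i, Measurable (X i))
    (hXpos : ∀ i ω, 0 ≤ X i ω)
    (α : Fin n → ℝ) (hα : ∀ i, 0 < α i) (l : Fin n → ℝ → ℝ)
    (hslow : ∀ i, ∀ t > (0:ℝ), Tendsto (fun x => l i (t * x) / l i x) atTop (nhds 1))
    (Fbar : Fin n → ℝ → ℝ)
    (hFbar : ∀ i x, Fbar i x = (μ {ω | x < X i ω}).toReal)
    (hreg : ∀ i, ∀ x > (0:ℝ), Fbar i x = x ^ (-(α i)) * l i x)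
    (z : ℝ → ℝ) (hz : ∀ s, z s = (μ {ω | s < ∑ i, X i ω}).toReal)
    (A : Fin n → ℝ → Set Ω₀) (hA : ∀ i s, MeasurableSet (A i s))
    (Z : ℝ → Ω₀ → ℝ)
    (hZ : ∀ s ω, Z s ω = (μ {ω' | ∀ i, X i ω' ≤ s}ᶜ).toReal
      + ∑ i, (Fbar i (s / n) - Fbar i s) * (A i s).indicator (fun _ => (1:ℝ)) ω)
    (hunbiased : ∀ s, ∫ ω, Z s ω ∂μ = z s) :
    Filter.limsup (fun s => variance (Z s) μ / (z s) ^ 2) atTop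
        ≤ ∑ i, (n : ℝ) ^ (2 * α i) ∧
      Filter.IsBoundedUnder (· ≤ ·) atTop
        (fun s => Real.sqrt (∫ ω, (Z s ω) ^ 2 ∂μ) / z s) :=
  stmt10_general μ n X hXpos α l hslow Fbar hFbar hreg z hz A hA Z hZ hunbiased
end
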